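/- arXiv:math/0110060 — 8 statements merged into one kernel-verified Lean document; each statement's English description precedes it below -/
import Mathlib

section
/- Let H be a transitive permutation group of rank 3 on a finite set Ω, with subdegrees 1 ≤ u ≤ v (so a point stabilizer has orbits of sizes 1, u, v). If H is imprimitive, then 1 + u divides v. -/
/-!
A block `C` through `ω` is fixed setwise by the stabilizer `H_ω`, so `C \ {ω}` and the complement
`Cᶜ` are unions of `H_ω`-orbits. With only three suborbits, one of them `{ω}`, a nontrivial block
is `{ω} ∪ Δ` for a suborbit `Δ`, and `Cᶜ` is the remaining suborbit `Δ'`. As `|C|` divides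
`|Ω| = |C| + |Δ'|`, we get `1 + |Δ| ∣ |Δ'|`, and `u ≤ v` rules out every assignment of the
subdegrees except `|Δ| = u`, `|Δ'| = v`.
-/

open Pointwise MulAction

namespace MulAction

variable {G X : Type*} [Group G] [MulAction G X]

lemma IsFixedBlock.orbit_subset {D : Set X} (hD : IsFixedBlock G D) {x : X} (hx : x ∈ D) :
    orbit G x ⊆ D := by
  rintro _ ⟨g, rfl⟩
  rw [← hD g]
  exact Set.smul_mem_smul_set hx

lemma IsFixedBlock.compl {D : Set X} (hD : IsFixedBlock G D) : IsFixedBlock G Dᶜ :=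
  fun g ↦ by rw [Set.smul_set_compl, hD g]

lemma IsFixedBlock.sdiff {D E : Set X} (hD : IsFixedBlock G D) (hE : IsFixedBlock G E) :
    IsFixedBlock G (D \ E) :=
  fun g ↦ by rw [Set.smul_set_sdiff, hD g, hE g]

lemma isFixedBlock_stabilizer_singleton (a : X) : IsFixedBlock (stabilizer G a) {a} :=
  fun g ↦ by rw [Set.smul_set_singleton, Subgroup.smul_def, mem_stabilizer_iff.mp g.2]

lemma IsBlock.isFixedBlock_stabilizer {B : Set X} (hB : IsBlock G B) {a : X} (ha : a ∈ B) :
    IsFixedBlock (stabilizer G a) B :=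
  fun g ↦ hB.stabilizer_le ha g.2

lemma IsBlock.exists_smul_mem [IsPretransitive G X] {B : Set X} (hB : IsBlock G B)
    (hne : B.Nonempty) (a : X) : ∃ C : Set X, IsBlock G C ∧ a ∈ C ∧ C.ncard = B.ncard := by
  obtain ⟨b, hb⟩ := hne
  obtain ⟨g, rfl⟩ := exists_smul_eq G b a
  exact ⟨g • B, hB.translate g, Set.smul_mem_smul_set hb, Set.ncard_smul_set g B⟩

lemma mem_orbit_of_card_orbitRel_quotient_eq_three
    (h3 : Nat.card (orbitRel.Quotient G X) = 3) {x₁ x₂ x₃ : X} (h₁₂ : x₂ ∉ orbit G x₁)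
    (h₁₃ : x₃ ∉ orbit G x₁) (h₂₃ : x₃ ∉ orbit G x₂) (z : X) :
    z ∈ orbit G x₁ ∨ z ∈ orbit G x₂ ∨ z ∈ orbit G x₃ := by
  have : Finite (orbitRel.Quotient G X) := Nat.finite_of_card_ne_zero (by omega)
  let f : Fin 3 → orbitRel.Quotient G X := ![⟦x₁⟧, ⟦x₂⟧, ⟦x₃⟧]
  have hf : Function.Injective f := by
    intro i j hij
    fin_cases i <;> fin_cases j <;>
      simp_all [f, Quotient.eq, orbitRel_apply, mem_orbit_symm]
  obtain ⟨i, hi⟩ := (hf.bijective_of_nat_card_le (by simp [h3])).2 ⟦z⟧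
  fin_cases i <;> simp_all [f, Quotient.eq, orbitRel_apply, mem_orbit_symm]

lemma IsFixedBlock.eq_orbit_of_card_orbitRel_quotient_eq_three
    (h3 : Nat.card (orbitRel.Quotient G X) = 3) {D₁ D₂ D₃ : Set X} (hD₁ : IsFixedBlock G D₁)
    (hD₂ : IsFixedBlock G D₂) (hD₃ : IsFixedBlock G D₃) (h₁₂ : Disjoint D₁ D₂)
    (h₁₃ : Disjoint D₁ D₃) (h₂₃ : Disjoint D₂ D₃) {x₁ x₂ x₃ : X} (hx₁ : x₁ ∈ D₁) (hx₂ : x₂ ∈ D₂)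
    (hx₃ : x₃ ∈ D₃) : D₁ = orbit G x₁ := by
  refine subset_antisymm (fun z hz ↦ ?_) (hD₁.orbit_subset hx₁)
  have hcover := mem_orbit_of_card_orbitRel_quotient_eq_three h3
    (fun h ↦ h₁₂.notMem_of_mem_right hx₂ (hD₁.orbit_subset hx₁ h))
    (fun h ↦ h₁₃.notMem_of_mem_right hx₃ (hD₁.orbit_subset hx₁ h))
    (fun h ↦ h₂₃.notMem_of_mem_right hx₃ (hD₂.orbit_subset hx₂ h)) z
  rcases hcover with h | h | h
  · exact h
  · exact absurd (hD₂.orbit_subset hx₂ h) (h₁₂.notMem_of_mem_left hz)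
  · exact absurd (hD₃.orbit_subset hx₃ h) (h₁₃.notMem_of_mem_left hz)

lemma IsBlock.ncard_dvd_ncard_compl [IsPretransitive G X] [Finite X] {B : Set X}
    (hB : IsBlock G B) (hne : B.Nonempty) : B.ncard ∣ Bᶜ.ncard := by
  have := hB.ncard_dvd_card hne
  rwa [← Set.ncard_add_ncard_compl B, Nat.dvd_add_right dvd_rfl] at this

lemma IsBlock.sdiff_singleton_eq_orbit_and_compl_eq_orbit {a x y : X} {B : Set X}
    (hrank : Nat.card (orbitRel.Quotient (stabilizer G a) X) = 3) (hB : IsBlock G B)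
    (ha : a ∈ B) (hx : x ∈ B) (hxa : x ≠ a) (hy : y ∉ B) :
    B \ {a} = orbit (stabilizer G a) x ∧ Bᶜ = orbit (stabilizer G a) y := by
  have hBfix := hB.isFixedBlock_stabilizer ha
  have hafix := isFixedBlock_stabilizer_singleton (G := G) a
  have hd₁ : Disjoint (B \ {a}) {a} := Set.disjoint_sdiff_left
  have hd₂ : Disjoint (B \ {a}) Bᶜ := disjoint_compl_right.mono_left Set.sdiff_subset
  have hd₃ : Disjoint {a} Bᶜ := Set.disjoint_singleton_left.mpr (not_not.mpr ha)
  exact ⟨(hBfix.sdiff hafix).eq_orbit_of_card_orbitRel_quotient_eq_three hrank hafix hBfix.compl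
      hd₁ hd₂ hd₃ ⟨hx, hxa⟩ rfl hy,
    hBfix.compl.eq_orbit_of_card_orbitRel_quotient_eq_three hrank (hBfix.sdiff hafix) hafix
      hd₂.symm hd₃.symm hd₁ hy ⟨hx, hxa⟩ rfl⟩

end MulAction

lemma one_add_dvd_of_subdegrees {u v a b : ℕ} (huv : u ≤ v)
    (ha : a = 1 ∨ a = u ∨ a = v) (hb : b = 1 ∨ b = u ∨ b = v) (hab : a + b = u + v)
    (hdvd : a + 1 ∣ b) : 1 + u ∣ v := by
  rcases ha with ha | ha | ha
  · rcases hb with hb | hb | hb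
    · exact absurd (Nat.le_of_dvd one_pos (hb ▸ ha ▸ hdvd)) (by omega)
    · have hu : u = 0 := Nat.eq_zero_of_dvd_of_lt (hb ▸ ha ▸ hdvd) (by omega)
      simp [hu]
    · rw [ha, hb] at hdvd
      rwa [show u = 1 by omega]
  · rwa [add_comm, ← ha, ← show b = v by omega]
  · have hdvd' : v + 1 ∣ u := by rwa [ha, show b = u by omega] at hdvd
    simp [Nat.eq_zero_of_dvd_of_lt hdvd' (by omega)]

theorem stmt2_general {Ω : Type*} [Fintype Ω] (H : Subgroup (Equiv.Perm Ω))
    (htrans : MulAction.IsPretransitive H Ω)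
    (ω : Ω) (u v : ℕ) (huv : u ≤ v)
    (hcard : Fintype.card Ω = 1 + u + v)
    (hrank : Nat.card (MulAction.orbitRel.Quotient (MulAction.stabilizer H ω) Ω) = 3)
    (horb : ∀ x : Ω, (MulAction.orbit (MulAction.stabilizer H ω) x).ncard = 1 ∨
      (MulAction.orbit (MulAction.stabilizer H ω) x).ncard = u ∨
      (MulAction.orbit (MulAction.stabilizer H ω) x).ncard = v)
    (himpr : ∃ B : Set Ω, MulAction.IsBlock H B ∧ 1 < B.ncard ∧ B.ncard < Fintype.card Ω) :
    (1 + u) ∣ v := by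
  obtain ⟨B, hB, h1B, hBΩ⟩ := himpr
  obtain ⟨C, hC, hωC, hCB⟩ := hB.exists_smul_mem (Set.nonempty_of_ncard_ne_zero (by omega)) ω
  obtain ⟨x, hxC, hxω⟩ := Set.exists_ne_of_one_lt_ncard (hCB ▸ h1B) ω
  obtain ⟨y, hyC⟩ : ∃ y, y ∉ C := by
    by_contra! h
    rw [Set.eq_univ_of_forall h, Set.ncard_univ, Nat.card_eq_fintype_card] at hCB
    omega
  obtain ⟨hx, hy⟩ := hC.sdiff_singleton_eq_orbit_and_compl_eq_orbit hrank hωC hxC hxω hyC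
  have hdvd := hC.ncard_dvd_ncard_compl ⟨ω, hωC⟩
  have hsplit := Set.ncard_add_ncard_compl C
  rw [← Set.ncard_sdiff_singleton_add_one hωC, hx, hy] at hdvd hsplit
  rw [Nat.card_eq_fintype_card, hcard] at hsplit
  exact one_add_dvd_of_subdegrees huv (horb x) (horb y) (by omega) hdvd

/-- A transitive, imprimitive permutation group of rank 3 with subdegrees `1 ≤ u ≤ v`
satisfies `(1+u) ∣ v`. -/
theorem stmt2 {Ω : Type*} [Fintype Ω] (H : Subgroup (Equiv.Perm Ω))
    (htrans : MulAction.IsPretransitive H Ω)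
    (ω : Ω) (u v : ℕ) (hu : 1 ≤ u) (huv : u ≤ v)
    (hcard : Fintype.card Ω = 1 + u + v)
    (hrank : Nat.card (MulAction.orbitRel.Quotient (MulAction.stabilizer H ω) Ω) = 3)
    (horb : ∀ x : Ω, (MulAction.orbit (MulAction.stabilizer H ω) x).ncard = 1 ∨
      (MulAction.orbit (MulAction.stabilizer H ω) x).ncard = u ∨
      (MulAction.orbit (MulAction.stabilizer H ω) x).ncard = v)
    (hexu : ∃ x : Ω, (MulAction.orbit (MulAction.stabilizer H ω) x).ncard = u)
    (hexv : ∃ x : Ω, (MulAction.orbit (MulAction.stabilizer H ω) x).ncard = v)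
    (himpr : ∃ B : Set Ω, MulAction.IsBlock H B ∧ 1 < B.ncard ∧ B.ncard < Fintype.card Ω) :
    (1 + u) ∣ v :=
  stmt2_general H htrans ω u v huv hcard hrank horb himpr
end

section
/- For every n ∈ ℕ, the order of any element of the symmetric group S_n is at most e^(n/e), where e is Euler's constant. -/
/-!
A permutation with cycle type `(k₁, …, kₘ)` has order `lcm kᵢ ≤ ∏ kᵢ`, and its cycle lengths sum
to at most `n`. Since `x ≤ e^(x/e)` for every real `x` (this is `1 + y ≤ e^y` at `y = x/e - 1`),
the product is at most `∏ e^(kᵢ/e) = e^(∑ kᵢ/e) ≤ e^(n/e)`.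
-/

open Real

namespace Real

theorem le_exp_div_exp_one (x : ℝ) : x ≤ exp (x / exp 1) := by
  have h := add_one_le_exp (x / exp 1 - 1)
  rw [exp_sub, le_div_iff₀ (exp_pos 1)] at h
  field_simp at h
  linarith

theorem prod_map_le_exp_sum_map_div_exp_one {ι : Type*} (s : Multiset ι) (f : ι → ℝ)
    (hf : ∀ i ∈ s, 0 ≤ f i) : (s.map f).prod ≤ exp ((s.map f).sum / exp 1) := by
  rw [← Multiset.sum_map_div, exp_multiset_sum, Multiset.map_map]
  exact Multiset.prod_map_le_prod_map₀ f _ hf fun i _ ↦ le_exp_div_exp_one (f i)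

end Real

namespace Equiv.Perm

variable {α : Type*} [Fintype α] [DecidableEq α]

theorem orderOf_le_prod_cycleType (g : Perm α) : orderOf g ≤ g.cycleType.prod := by
  rw [← lcm_cycleType]
  refine Nat.le_of_dvd ?_ (Multiset.lcm_dvd.2 fun _ ↦ Multiset.dvd_prod)
  exact Multiset.prod_pos fun k hk ↦ (two_le_of_mem_cycleType hk).trans_lt' two_pos

theorem sum_cycleType_le_card (g : Perm α) : g.cycleType.sum ≤ Fintype.card α := by
  rw [sum_cycleType]
  exact Finset.card_le_univ _

theorem orderOf_le_exp_card_div_exp_one (g : Perm α) :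
    (orderOf g : ℝ) ≤ exp (Fintype.card α / exp 1) :=
  calc (orderOf g : ℝ) ≤ (g.cycleType.map ((↑) : ℕ → ℝ)).prod := by
        rw [← Nat.cast_multiset_prod]
        exact_mod_cast orderOf_le_prod_cycleType g
    _ ≤ exp ((g.cycleType.map ((↑) : ℕ → ℝ)).sum / exp 1) :=
        prod_map_le_exp_sum_map_div_exp_one _ _ fun k _ ↦ k.cast_nonneg
    _ ≤ exp (Fintype.card α / exp 1) := by
        rw [← Nat.cast_multiset_sum]
        gcongr
        exact_mod_cast sum_cycleType_le_card g

end Equiv.Perm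

/-- The order of any element of `S_n` is at most `e^(n/e)`. -/
theorem stmt3 (n : ℕ) (g : Equiv.Perm (Fin n)) :
    (orderOf g : ℝ) ≤ Real.exp (n / Real.exp 1) := by
  simpa using g.orderOf_le_exp_card_div_exp_one
end

section
/- Let g ∈ S_n be a permutation whose distinct cycle lengths greater than 1 are ν_1 < ν_2 < ... < ν_r. Then the order of g satisfies ord(g) ≤ (n/r)^r. -/
/-!
The order of `g` is the lcm of its distinct cycle lengths, hence at most their product. These
`r` lengths belong to disjoint cycles, so they sum to at most `n`, and AM-GM bounds their
product by `(n / r) ^ r`.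
-/

open Finset

theorem Real.prod_le_arith_mean_pow {ι : Type*} (s : Finset ι) (z : ι → ℝ)
    (hz : ∀ i ∈ s, 0 ≤ z i) : ∏ i ∈ s, z i ≤ ((∑ i ∈ s, z i) / #s) ^ #s := by
  rcases s.eq_empty_or_nonempty with rfl | hs
  · simp
  have amgm := Real.geom_mean_le_arith_mean s 1 z (fun _ _ => zero_le_one) (by simpa using hs) hz
  simp only [Pi.one_apply, Real.rpow_one, one_mul, sum_const, nsmul_eq_mul, mul_one] at amgm
  rwa [Real.rpow_inv_le_iff_of_pos (prod_nonneg hz)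
    (div_nonneg (sum_nonneg hz) (Nat.cast_nonneg _)) (by simpa using hs), Real.rpow_natCast] at amgm

theorem Multiset.sum_toFinset_le {M : Type*} [AddCommMonoid M] [PartialOrder M]
    [CanonicallyOrderedAdd M] [DecidableEq M] (m : Multiset M) :
    ∑ a ∈ m.toFinset, a ≤ m.sum := by
  obtain ⟨u, hu⟩ := Multiset.le_iff_exists_add.mp (Multiset.dedup_le m)
  calc ∑ a ∈ m.toFinset, a = m.dedup.sum := by
        rw [Finset.sum_eq_multiset_sum, Multiset.toFinset_val, Multiset.map_id']
    _ ≤ m.dedup.sum + u.sum := le_self_add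
    _ = m.sum := by rw [← Multiset.sum_add, ← hu]

namespace Equiv.Perm
variable {α : Type*} [Fintype α] [DecidableEq α]

theorem orderOf_eq_lcm_cycleType_toFinset (g : Perm α) :
    orderOf g = g.cycleType.toFinset.lcm id := by
  rw [Finset.lcm_def, Multiset.toFinset_val, Multiset.map_id, Multiset.lcm_dedup, lcm_cycleType]

theorem orderOf_le_prod_cycleType_toFinset (g : Perm α) :
    orderOf g ≤ ∏ ν ∈ g.cycleType.toFinset, ν := by
  refine Nat.le_of_dvd (prod_pos fun ν hν => ?_) ?_
  · exact zero_lt_two.trans_le (two_le_of_mem_cycleType (Multiset.mem_toFinset.mp hν))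
  · rw [orderOf_eq_lcm_cycleType_toFinset]
    exact Finset.lcm_dvd_prod _ _

theorem sum_cycleType_toFinset_le_card (g : Perm α) :
    ∑ ν ∈ g.cycleType.toFinset, ν ≤ Fintype.card α :=
  calc ∑ ν ∈ g.cycleType.toFinset, ν ≤ g.cycleType.sum := Multiset.sum_toFinset_le _
    _ = #g.support := sum_cycleType g
    _ ≤ Fintype.card α := card_le_univ _

end Equiv.Perm

/-- If the distinct cycle lengths `>1` of `g ∈ S_n` are `ν_1 < ... < ν_r`, then
`ord(g) ≤ (n/r)^r`. -/
theorem stmt5 (n r : ℕ) (g : Equiv.Perm (Fin n))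
    (hr : g.cycleType.toFinset.card = r) :
    (orderOf g : ℝ) ≤ ((n : ℝ) / r) ^ r := by
  have hsum : ∑ ν ∈ g.cycleType.toFinset, (ν : ℝ) ≤ n := by
    rw [← Nat.cast_sum, Nat.cast_le]
    exact g.sum_cycleType_toFinset_le_card.trans_eq (Fintype.card_fin n)
  calc (orderOf g : ℝ) ≤ ((∏ ν ∈ g.cycleType.toFinset, ν : ℕ) : ℝ) :=
        Nat.cast_le.mpr g.orderOf_le_prod_cycleType_toFinset
    _ = ∏ ν ∈ g.cycleType.toFinset, (ν : ℝ) := Nat.cast_prod _ _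
    _ ≤ ((∑ ν ∈ g.cycleType.toFinset, (ν : ℝ)) / r) ^ r :=
        hr ▸ Real.prod_le_arith_mean_pow _ _ fun _ _ => Nat.cast_nonneg _
    _ ≤ ((n : ℝ) / r) ^ r := by gcongr
end

section
/- Let u, v ≥ 2 be integers with (u,v) not equal to (2,2), (3,2), (4,2), or (2,3). Then (u!)^v · v! < (1/2) · (uv)! / e^(uv/e). -/
/-!
Since `e^{1/e} < 29/20`, it suffices to show `2 · (29/20)^{uv} · (u!)^v · v! ≤ (uv)!`. Increasing `v`
by one multiplies the right side by `(uv + 1) ⋯ (uv + u) ≥ (v + 1)^u · u!` and the left side by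
`(29/20)^u · u! · (v + 1)`, and `(29/20)^u ≤ 3^{u-1}`; increasing `u` along `v = 2` is a similar
quadratic estimate. The induction starts from the base cases `(5,2)`, `(2,4)`, `(3,3)`, `(4,3)`.
-/

open Nat Finset Real

/-- `(uv)! / ((u!)^v · v!)` counts the partitions of a `uv`-element set into `v` blocks of size `u`;
the bound says that this count is at least `2 · (29/20)^{uv}`. -/
def PartitionBound (u v : ℕ) : Prop :=
  2 * 29 ^ (u * v) * (u ! ^ v * v !) ≤ 20 ^ (u * v) * (u * v)!

theorem succ_pow_mul_factorial_le_ascFactorial (u v : ℕ) :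
    (v + 1) ^ u * u ! ≤ (u * v + 1).ascFactorial u :=
  calc (v + 1) ^ u * u ! = ∏ i ∈ range u, (v + 1) * (i + 1) := by
        rw [prod_mul_distrib, prod_const, card_range, prod_range_add_one_eq_factorial]
    _ ≤ ∏ i ∈ range u, (u * v + 1 + i) := prod_le_prod' fun i hi => by
        have := mem_range.1 hi
        nlinarith
    _ = (u * v + 1).ascFactorial u := (ascFactorial_eq_prod_range _ _).symm

theorem twentyNine_pow_mul_le_twenty_pow_mul_pow (u v : ℕ) (hu : 2 ≤ u) (hv : 2 ≤ v) :
    29 ^ u * (v + 1) ≤ 20 ^ u * (v + 1) ^ u := by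
  obtain ⟨j, rfl⟩ : ∃ j, u = j + 2 := ⟨u - 2, by omega⟩
  calc 29 ^ (j + 2) * (v + 1) = 841 * 29 ^ j * (v + 1) := by ring
    _ ≤ 1200 * 60 ^ j * (v + 1) := by gcongr <;> norm_num
    _ = 20 ^ (j + 2) * 3 ^ (j + 1) * (v + 1) := by
        rw [show (60 : ℕ) = 3 * 20 by norm_num, mul_pow]; ring
    _ ≤ 20 ^ (j + 2) * (v + 1) ^ (j + 1) * (v + 1) := by gcongr; omega
    _ = 20 ^ (j + 2) * (v + 1) ^ (j + 2) := by ring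

namespace PartitionBound

theorem succ_right {u v : ℕ} (hu : 2 ≤ u) (hv : 2 ≤ v) (h : PartitionBound u v) :
    PartitionBound u (v + 1) := by
  have hfac : (u * (v + 1))! = (u * v)! * (u * v + 1).ascFactorial u := by
    rw [factorial_mul_ascFactorial, mul_add_one]
  unfold PartitionBound at h ⊢
  calc 2 * 29 ^ (u * (v + 1)) * (u ! ^ (v + 1) * (v + 1)!)
      = 2 * 29 ^ (u * v) * (u ! ^ v * v !) * (29 ^ u * (v + 1) * u !) := by
        rw [mul_add_one, pow_add, pow_succ, factorial_succ]; ring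
    _ ≤ 20 ^ (u * v) * (u * v)! * (20 ^ u * (v + 1) ^ u * u !) :=
        mul_le_mul' h
          (Nat.mul_le_mul_right _ (twentyNine_pow_mul_le_twenty_pow_mul_pow u v hu hv))
    _ ≤ 20 ^ (u * v) * (u * v)! * (20 ^ u * (u * v + 1).ascFactorial u) := by
        rw [mul_assoc (20 ^ u)]
        exact Nat.mul_le_mul_left _
          (Nat.mul_le_mul_left _ (succ_pow_mul_factorial_le_ascFactorial u v))
    _ = 20 ^ (u * (v + 1)) * (u * (v + 1))! := by rw [hfac, Nat.mul_add_one, pow_add]; ring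

theorem succ_left_two {u : ℕ} (hu : 1 ≤ u) (h : PartitionBound u 2) :
    PartitionBound (u + 1) 2 := by
  have hfac : ((u + 1) * 2)! = (u * 2)! * ((2 * u + 1) * (2 * u + 2)) := by
    rw [show (u + 1) * 2 = u * 2 + 1 + 1 by ring, factorial_succ, factorial_succ]; ring
  unfold PartitionBound at h ⊢
  calc 2 * 29 ^ ((u + 1) * 2) * ((u + 1)! ^ 2 * 2 !)
      = 2 * 29 ^ (u * 2) * (u ! ^ 2 * 2 !) * (29 ^ 2 * (u + 1) ^ 2) := by
        rw [factorial_succ u, show (u + 1) * 2 = u * 2 + 2 by ring, pow_add]; ring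
    _ ≤ 20 ^ (u * 2) * (u * 2)! * (20 ^ 2 * ((2 * u + 1) * (2 * u + 2))) :=
        mul_le_mul' h (by nlinarith)
    _ = 20 ^ ((u + 1) * 2) * ((u + 1) * 2)! := by
        rw [hfac, show (u + 1) * 2 = u * 2 + 2 by ring, pow_add]; ring

theorem mono_right {u v₀ v : ℕ} (hu : 2 ≤ u) (hv₀ : 2 ≤ v₀) (h : PartitionBound u v₀)
    (hv : v₀ ≤ v) : PartitionBound u v := by
  induction v, hv using Nat.le_induction with
  | base => exact h
  | succ w hw ih => exact ih.succ_right hu (hv₀.trans hw)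

end PartitionBound

theorem partitionBound_two {u : ℕ} (hu : 5 ≤ u) : PartitionBound u 2 := by
  induction u, hu using Nat.le_induction with
  | base => unfold PartitionBound; norm_num [factorial]
  | succ w hw ih => exact ih.succ_left_two (by omega)

theorem partitionBound {u v : ℕ} (hu : 2 ≤ u) (hv : 2 ≤ v)
    (h22 : (u, v) ≠ (2, 2)) (h32 : (u, v) ≠ (3, 2))
    (h42 : (u, v) ≠ (4, 2)) (h23 : (u, v) ≠ (2, 3)) : PartitionBound u v := by
  obtain hu5 | hu5 := le_or_gt 5 u
  · exact (partitionBound_two hu5).mono_right (by omega) le_rfl hv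
  simp only [ne_eq, Prod.mk.injEq, not_and] at h22 h32 h42 h23
  interval_cases u
  · exact PartitionBound.mono_right (v₀ := 4) le_rfl (by norm_num)
      (by unfold PartitionBound; norm_num [factorial]) (by omega)
  · exact PartitionBound.mono_right (v₀ := 3) (by norm_num) (by norm_num)
      (by unfold PartitionBound; norm_num [factorial]) (by omega)
  · exact PartitionBound.mono_right (v₀ := 3) (by norm_num) (by norm_num)
      (by unfold PartitionBound; norm_num [factorial]) (by omega)

theorem exp_exp_neg_one_lt : exp (exp (-1)) < 29 / 20 :=
  calc exp (exp (-1)) < exp 0.368 := exp_lt_exp.2 (exp_neg_one_lt_d9.trans (by norm_num))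
    _ ≤ ∑ m ∈ range 5, (0.368 : ℝ) ^ m / m ! + 0.368 ^ 5 * (5 + 1) / (5 ! * 5) :=
      exp_bound' (by norm_num) (by norm_num) (by norm_num)
    _ < 29 / 20 := by norm_num [sum_range_succ, factorial]

/-- For integers `u, v ≥ 2` with `(u,v) ∉ {(2,2),(3,2),(4,2),(2,3)}`,
`(u!)^v · v! < (1/2) · (uv)! / e^(uv/e)`. -/
theorem stmt6 (u v : ℕ) (hu : 2 ≤ u) (hv : 2 ≤ v)
    (h22 : (u, v) ≠ (2, 2)) (h32 : (u, v) ≠ (3, 2))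
    (h42 : (u, v) ≠ (4, 2)) (h23 : (u, v) ≠ (2, 3)) :
    ((u.factorial : ℝ)) ^ v * v.factorial <
      (1 / 2) * (u * v).factorial / Real.exp ((u * v : ℝ) / Real.exp 1) := by
  have hnat : (2 * 29 ^ (u * v) * (u ! ^ v * v !) : ℝ) ≤ 20 ^ (u * v) * (u * v)! := by
    exact_mod_cast partitionBound hu hv h22 h32 h42 h23
  have hexp : exp ((u * v : ℝ) / exp 1) < (29 / 20) ^ (u * v) := by
    rw [div_eq_mul_inv, ← exp_neg, ← Nat.cast_mul, exp_nat_mul]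
    exact pow_lt_pow_left₀ exp_exp_neg_one_lt (exp_pos _).le (by positivity)
  rw [lt_div_iff₀ (exp_pos _)]
  calc (u ! : ℝ) ^ v * v ! * exp ((u * v : ℝ) / exp 1)
      < (u ! ^ v * v !) * (29 / 20) ^ (u * v) := by gcongr
    _ = (2 * 29 ^ (u * v) * (u ! ^ v * v !)) / 20 ^ (u * v) / 2 := by rw [div_pow]; ring
    _ ≤ 20 ^ (u * v) * (u * v)! / 20 ^ (u * v) / 2 := by gcongr
    _ = 1 / 2 * (u * v)! := by field_simp
end

section
/- Let Δ_1, ..., Δ_m be finite sets and g_i a permutation of Δ_i with c_i cycles on Δ_i. Then the product permutation (g_1,...,g_m) acting componentwise on Δ_1 × ... × Δ_m has at least c_1·c_2·...·c_m cycles. -/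
/-!
Powers of the product permutation act coordinatewise, so projecting a cycle of the product to
the cycles of its coordinates is well defined; it is onto, since any family of cycles is hit by
the cycle of a family of representatives. Hence there are at least `∏ cᵢ` cycles.
-/

open MulAction

namespace Equiv.Perm

variable {ι : Type*} {Δ : ι → Type*}

def piCongrRightHom (Δ : ι → Type*) : (∀ i, Perm (Δ i)) →* Perm (∀ i, Δ i) where
  toFun := Equiv.piCongrRight
  map_one' := rfl
  map_mul' _ _ := rfl

theorem piCongrRight_zpow_apply (g : ∀ i, Perm (Δ i)) (n : ℤ) (x : ∀ i, Δ i) (i : ι) :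
    (Equiv.piCongrRight g ^ n) x i = (g i ^ n) (x i) := by
  change (piCongrRightHom Δ g ^ n) x i = _
  rw [← map_zpow]
  rfl

theorem orbitRel_zpowers_piCongrRight_apply {g : ∀ i, Perm (Δ i)} {x y : ∀ i, Δ i}
    (h : orbitRel (Subgroup.zpowers (Equiv.piCongrRight g)) (∀ i, Δ i) x y) (i : ι) :
    orbitRel (Subgroup.zpowers (g i)) (Δ i) (x i) (y i) := by
  obtain ⟨⟨σ, n, rfl⟩, hσ⟩ := h
  exact ⟨⟨g i ^ n, n, rfl⟩, (piCongrRight_zpow_apply g n y i).symm.trans (congrFun hσ i)⟩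

def orbitsPiCongrRightToPi (g : ∀ i, Perm (Δ i)) :
    orbitRel.Quotient (Subgroup.zpowers (Equiv.piCongrRight g)) (∀ i, Δ i) →
      ∀ i, orbitRel.Quotient (Subgroup.zpowers (g i)) (Δ i) :=
  Quotient.lift (fun x i => ⟦x i⟧) fun _ _ h =>
    funext fun i => Quotient.sound (orbitRel_zpowers_piCongrRight_apply h i)

theorem orbitsPiCongrRightToPi_surjective (g : ∀ i, Perm (Δ i)) :
    Function.Surjective (orbitsPiCongrRightToPi g) := fun q =>
  ⟨⟦fun i => (q i).out⟧, funext fun i => Quotient.out_eq (q i)⟩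

theorem prod_card_orbits_le_card_orbits_piCongrRight [Fintype ι] [∀ i, Finite (Δ i)]
    (g : ∀ i, Perm (Δ i)) :
    ∏ i, Nat.card (orbitRel.Quotient (Subgroup.zpowers (g i)) (Δ i)) ≤
      Nat.card (orbitRel.Quotient (Subgroup.zpowers (Equiv.piCongrRight g)) (∀ i, Δ i)) := by
  rw [← Nat.card_pi]
  exact Nat.card_le_card_of_surjective _ (orbitsPiCongrRightToPi_surjective g)

end Equiv.Perm

/-- If `g_i` has `c_i` cycles on `Δ_i`, then the product permutation has at least
`c_1 ⋯ c_m` cycles on `Δ_1 × ⋯ × Δ_m`. -/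
theorem stmt8 {m : ℕ} (Δ : Fin m → Type*) [∀ i, Fintype (Δ i)]
    (g : ∀ i, Equiv.Perm (Δ i)) (c : Fin m → ℕ)
    (hc : ∀ i, Nat.card (MulAction.orbitRel.Quotient (Subgroup.zpowers (g i)) (Δ i)) = c i) :
    ∏ i, c i ≤
      Nat.card (MulAction.orbitRel.Quotient
        (Subgroup.zpowers (Equiv.piCongrRight g)) (∀ i, Δ i)) := by
  simp only [← hc]
  exact Equiv.Perm.prod_card_orbits_le_card_orbits_piCongrRight g
end

section
/- Let V be a vector space of dimension n ≥ 2 over the finite field F_q equipped with a non-degenerate bilinear form, and let τ be an isometry of the form which acts irreducibly on V. Then n is even and the order of τ divides q^{n/2} + 1. -/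
open Polynomial

lemma aux_field {F E : Type*} [Field F] [Fintype F] [Field E] [Fintype E] [Algebra F E]
    (d : ℕ) (hd : 2 ≤ d) (hdim : Module.finrank F E = d)
    (α : E) (hgen : Algebra.adjoin F ({α} : Set E) = ⊤)
    (hinv : (Polynomial.aeval α⁻¹) (minpoly F α) = 0) :
    Even d ∧ orderOf α ∣ Fintype.card F ^ (d / 2) + 1 := by
  classical
  set q := Fintype.card F with hq_def
  have hq : 1 < q := Fintype.one_lt_card
  -- characteristic
  set pc := ringChar F with hpc_def
  haveI : CharP F pc := ringChar.charP F
  obtain ⟨e, hpprime, hcard⟩ := FiniteField.card F pc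
  haveI : CharP E pc := charP_of_injective_algebraMap (algebraMap F E).injective pc
  haveI := Fact.mk hpprime
  have hα_int : IsIntegral F α := IsIntegral.of_finite F α
  set p := minpoly F α with hp_def
  have hp0 : p ≠ 0 := minpoly.ne_zero hα_int
  -- the Frobenius alg homs
  have hψcomm : ∀ (j : ℕ) (c : F),
      (iterateFrobenius E pc (e * j)) (algebraMap F E c) = algebraMap F E c := by
    intro j c
    rw [iterateFrobenius_def, ← map_pow]
    congr 1
    calc c ^ pc ^ (e * j) = c ^ (q : ℕ) ^ j := by rw [pow_mul, ← hcard]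
    _ = c := FiniteField.pow_card_pow j c
  have hψdef : ∀ (j : ℕ) (x : E), (iterateFrobenius E pc (e * j)) x = x ^ q ^ j := by
    intro j x
    rw [iterateFrobenius_def, pow_mul, ← hcard]
  -- powers of α by q^j are roots of p
  have hrootpow : ∀ j : ℕ, (Polynomial.aeval (α ^ q ^ j)) p = 0 := by
    intro j
    let ψ : E →ₐ[F] E := { toRingHom := iterateFrobenius E pc (e * j), commutes' := hψcomm j }
    have : α ^ q ^ j = ψ α := (hψdef j α).symm
    rw [this, Polynomial.aeval_algHom_apply, minpoly.aeval, map_zero]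
  have hcardE : Fintype.card E = q ^ d := by
    rw [← hdim]; exact Module.card_eq_pow_finrank
  -- distinctness
  have hdist : ∀ j : ℕ, 0 < j → j < d → α ^ q ^ j ≠ α := by
    intro j hj hjd heq
    let ψ : E →ₐ[F] E := { toRingHom := iterateFrobenius E pc (e * j), commutes' := hψcomm j }
    have hαfix : α ∈ AlgHom.equalizer ψ (AlgHom.id F E) := by
      show ψ α = α
      rw [show ψ α = α ^ q ^ j from hψdef j α, heq]
    have htop : (⊤ : Subalgebra F E) ≤ AlgHom.equalizer ψ (AlgHom.id F E) := by
      rw [← hgen]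
      exact Algebra.adjoin_le (Set.singleton_subset_iff.mpr hαfix)
    have hall : ∀ x : E, x ^ q ^ j = x := by
      intro x
      have := htop (Algebra.mem_top (x := x))
      rw [AlgHom.mem_equalizer] at this
      rw [← hψdef j x]; exact this
    -- card bound
    have h1q : 1 < q ^ j := Nat.one_lt_pow hj.ne' hq
    have hPne : (X ^ (q ^ j) - X : E[X]) ≠ 0 := FiniteField.X_pow_card_sub_X_ne_zero E h1q
    have hsub : (Finset.univ : Finset E) ⊆ (X ^ (q ^ j) - X : E[X]).roots.toFinset := by
      intro x _
      rw [Multiset.mem_toFinset, Polynomial.mem_roots hPne]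
      simp [Polynomial.IsRoot, hall x]
    have hle : Fintype.card E ≤ q ^ j := by
      calc Fintype.card E = (Finset.univ : Finset E).card := rfl
      _ ≤ (X ^ (q ^ j) - X : E[X]).roots.toFinset.card := Finset.card_le_card hsub
      _ ≤ Multiset.card (X ^ (q ^ j) - X : E[X]).roots := Multiset.toFinset_card_le _
      _ ≤ (X ^ (q ^ j) - X : E[X]).natDegree := Polynomial.card_roots' _
      _ = q ^ j := FiniteField.X_pow_card_sub_X_natDegree_eq E h1q
    rw [hcardE] at hle
    exact absurd hle (not_le.mpr (Nat.pow_lt_pow_right hq hjd))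
  -- α ≠ 0
  have hα0 : α ≠ 0 := by
    intro h
    have : Algebra.adjoin F ({α} : Set E) ≤ ⊥ := by
      apply Algebra.adjoin_le
      rw [h, Set.singleton_subset_iff]
      exact Subalgebra.zero_mem ⊥
    have hbot : (⊥ : Subalgebra F E) = ⊤ := le_antisymm le_top (hgen ▸ this)
    have := Subalgebra.bot_eq_top_iff_finrank_eq_one.mp hbot
    omega
  set m := orderOf α with hm_def
  have hiff : ∀ N : ℕ, 0 < N → (α ^ N = α ↔ m ∣ N - 1) := by
    intro N hN
    constructor
    · intro h
      apply orderOf_dvd_of_pow_eq_one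
      have : α ^ (N - 1) * α = 1 * α := by
        rw [← pow_succ, Nat.sub_add_cancel hN, h, one_mul]
      exact mul_right_cancel₀ hα0 this
    · intro h
      have h1 : α ^ (N - 1) = 1 := orderOf_dvd_iff_pow_eq_one.mp h
      calc α ^ N = α ^ (N - 1) * α := by rw [← pow_succ, Nat.sub_add_cancel hN]
      _ = α := by rw [h1, one_mul]
  -- roots of p in E
  set P := p.map (algebraMap F E) with hP_def
  have hP0 : P ≠ 0 := Polynomial.map_ne_zero (f := algebraMap F E) hp0
  have hProot : ∀ x : E, Polynomial.aeval x p = 0 → x ∈ P.roots.toFinset := by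
    intro x hx
    rw [Multiset.mem_toFinset, Polynomial.mem_roots hP0]
    rw [Polynomial.IsRoot, Polynomial.eval_map, ← Polynomial.aeval_def]
    exact hx
  have hTcard : P.roots.toFinset.card ≤ d := by
    calc P.roots.toFinset.card ≤ Multiset.card P.roots := Multiset.toFinset_card_le _
    _ ≤ P.natDegree := Polynomial.card_roots' _
    _ = p.natDegree := Polynomial.natDegree_map _
    _ ≤ d := hdim ▸ minpoly.natDegree_le α
  have hinj : Function.Injective (fun j : Fin d => α ^ q ^ (j : ℕ)) := by
    have key : ∀ i j : Fin d, (i : ℕ) < (j : ℕ) →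
        α ^ q ^ (i : ℕ) = α ^ q ^ (j : ℕ) → False := by
      intro i j hlt heq
      have hFinj : Function.Injective (iterateFrobenius E pc (↑e * (i : ℕ))) :=
        (iterateFrobenius E pc (↑e * (i : ℕ))).injective
      have h1 : (iterateFrobenius E pc (↑e * (i : ℕ))) (α ^ q ^ ((j : ℕ) - (i : ℕ)))
          = (iterateFrobenius E pc (↑e * (i : ℕ))) α := by
        rw [hψdef, hψdef, ← pow_mul, ← pow_add, Nat.sub_add_cancel hlt.le, heq]
      have h2 := hFinj h1
      exact hdist ((j : ℕ) - (i : ℕ)) (by omega) (by omega) h2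
    intro i j hij
    by_contra hne
    rcases lt_trichotomy (i : ℕ) (j : ℕ) with h | h | h
    · exact key i j h hij
    · exact hne (Fin.ext h)
    · exact key j i h hij.symm
  set S := Finset.image (fun j : Fin d => α ^ q ^ (j : ℕ)) Finset.univ with hS_def
  have hScard : S.card = d := by
    rw [hS_def, Finset.card_image_of_injective _ hinj, Finset.card_univ, Fintype.card_fin]
  have hST : S ⊆ P.roots.toFinset := by
    intro x hx
    rw [hS_def, Finset.mem_image] at hx
    obtain ⟨j, -, rfl⟩ := hx
    exact hProot _ (hrootpow j)
  have hSeq : S = P.roots.toFinset :=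
    Finset.eq_of_subset_of_card_le hST (hScard ▸ hTcard)
  have hinvS : α⁻¹ ∈ S := by
    rw [hSeq]; exact hProot _ hinv
  rw [hS_def, Finset.mem_image] at hinvS
  obtain ⟨k, -, hk⟩ := hinvS
  -- k ≠ 0
  have hk0 : (k : ℕ) ≠ 0 := by
    intro h0
    have hαinv : α = α⁻¹ := by rw [← hk, h0, pow_zero, pow_one]
    have hsq : α * α = 1 := by
      nth_rewrite 2 [hαinv]
      exact mul_inv_cancel₀ hα0
    have h2 : (α - 1) * (α + 1) = α * α - 1 := by ring
    rw [hsq, sub_self] at h2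
    have hαbot : α ∈ (⊥ : Subalgebra F E) := by
      rcases mul_eq_zero.mp h2 with h | h
      · rw [Algebra.mem_bot]
        exact ⟨1, by rw [map_one]; exact (sub_eq_zero.mp h).symm⟩
      · rw [Algebra.mem_bot]
        refine ⟨-1, ?_⟩
        rw [map_neg, map_one]
        have := eq_neg_of_add_eq_zero_left h
        rw [this]
    have hle : Algebra.adjoin F ({α} : Set E) ≤ ⊥ :=
      Algebra.adjoin_le (Set.singleton_subset_iff.mpr hαbot)
    have hbot : (⊥ : Subalgebra F E) = ⊤ := le_antisymm le_top (hgen ▸ hle)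
    have := Subalgebra.bot_eq_top_iff_finrank_eq_one.mp hbot
    omega
  set K := (k : ℕ) with hK_def
  have hKd : K < d := k.isLt
  -- m divides q^K + 1
  have hmqk : m ∣ q ^ K + 1 := by
    apply orderOf_dvd_of_pow_eq_one
    rw [pow_succ, hk, inv_mul_cancel₀ hα0]
  -- α ^ q ^ (2K) = α
  have h2k : α ^ q ^ (2 * K) = α := by
    rw [two_mul, pow_add, pow_mul, hk, inv_pow, hk, inv_inv]
  have hzm : ∀ j : ℕ, m ∣ q ^ j - 1 ↔ ((q : ZMod m)) ^ j = 1 := by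
    intro j
    rw [← ZMod.natCast_eq_zero_iff]
    rw [Nat.cast_sub (Nat.one_le_pow _ _ (by omega))]
    push_cast
    rw [sub_eq_zero, eq_comm]
  have hdvd2k : m ∣ q ^ (2 * K) - 1 := (hiff _ (pow_pos (by omega) _)).mp h2k
  have hdvdd : m ∣ q ^ d - 1 := by
    apply (hiff _ (pow_pos (by omega) _)).mp
    have := FiniteField.pow_card α
    rwa [hcardE] at this
  set g := Nat.gcd (2 * K) d with hg_def
  have hog : ((q : ZMod m)) ^ g = 1 := by
    apply orderOf_dvd_iff_pow_eq_one.mp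
    exact Nat.dvd_gcd (orderOf_dvd_of_pow_eq_one ((hzm _).mp hdvd2k))
      (orderOf_dvd_of_pow_eq_one ((hzm _).mp hdvdd))
  have hgfix : α ^ q ^ g = α := (hiff _ (pow_pos (by omega) _)).mpr ((hzm g).mpr hog)
  have hgpos : 0 < g := Nat.gcd_pos_of_pos_right _ (by omega)
  have hgd : g = d := by
    by_contra hne
    have : g < d := lt_of_le_of_ne (Nat.le_of_dvd (by omega) (Nat.gcd_dvd_right _ _)) hne
    exact hdist g hgpos this hgfix
  have hddvd : d ∣ 2 * K := hgd ▸ Nat.gcd_dvd_left _ _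
  obtain ⟨t, ht⟩ := hddvd
  have ht1 : t = 1 := by
    rcases Nat.lt_or_ge t 2 with h | h
    · interval_cases t
      · omega
      · rfl
    · have : d * 2 ≤ d * t := Nat.mul_le_mul_left d h
      omega
  have hdK : d = 2 * K := by subst ht1; omega
  refine ⟨⟨K, by omega⟩, ?_⟩
  rw [show d / 2 = K by omega]
  exact hmqk

set_option maxHeartbeats 800000 in
/-- If `τ` is an isometry of a non-degenerate bilinear form on an `n`-dimensional
(`n ≥ 2`) vector space over `F_q` acting irreducibly, then `n` is even and
`ord(τ) ∣ q^{n/2} + 1`. -/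
theorem stmt12 {F V : Type*} [Field F] [Fintype F] [AddCommGroup V] [Module F V]
    [FiniteDimensional F V] (n : ℕ) (hn : 2 ≤ n) (hdim : Module.finrank F V = n)
    (B : LinearMap.BilinForm F V) (hB : B.Nondegenerate)
    (τ : V ≃ₗ[F] V) (hiso : ∀ v w : V, B (τ v) (τ w) = B v w)
    (hirr : ∀ W : Submodule F V, (∀ v ∈ W, τ v ∈ W) → W = ⊥ ∨ W = ⊤) :
    Even n ∧ orderOf τ ∣ Fintype.card F ^ (n / 2) + 1 := by
  classical
  have hnt : Nontrivial V := Module.nontrivial_of_finrank_pos (R := F) (by omega)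
  set f : Module.End F V := τ.toLinearMap with hf_def
  have hfint : IsIntegral F f := LinearMap.isIntegral f
  set p := minpoly F f with hp_def
  have hpmonic : p.Monic := minpoly.monic hfint
  have hp0 : p ≠ 0 := minpoly.ne_zero hfint
  have hpaeval : Polynomial.aeval f p = 0 := minpoly.aeval F f
  have hpdegpos : 0 < p.natDegree := minpoly.natDegree_pos hfint
  -- f commutes with polynomials in f
  have hcomm : ∀ r : F[X], f * Polynomial.aeval f r = Polynomial.aeval f r * f := by
    intro r
    calc f * Polynomial.aeval f r = Polynomial.aeval f (Polynomial.X * r) := by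
          rw [map_mul, Polynomial.aeval_X]
    _ = Polynomial.aeval f (r * Polynomial.X) := by rw [mul_comm]
    _ = Polynomial.aeval f r * f := by rw [map_mul, Polynomial.aeval_X]
  -- p is irreducible
  have hpirr : Irreducible p := by
    constructor
    · intro hu
      have := Polynomial.natDegree_eq_zero_of_isUnit hu
      omega
    · intro a b hab
      by_contra hcon
      push_neg at hcon
      obtain ⟨ha, hb⟩ := hcon
      have ha0 : a ≠ 0 := by rintro rfl; rw [zero_mul] at hab; exact hp0 hab
      have hb0 : b ≠ 0 := by rintro rfl; rw [mul_zero] at hab; exact hp0 hab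
      have hunit : ∀ c : F[X], c ≠ 0 → c.natDegree = 0 → IsUnit c := by
        intro c hc0 hcd
        obtain ⟨cc, rfl⟩ := Polynomial.natDegree_eq_zero.mp hcd
        refine Polynomial.isUnit_C.mpr (isUnit_iff_ne_zero.mpr ?_)
        intro h; exact hc0 (by rw [h, map_zero])
      have hadeg : 0 < a.natDegree := by
        rcases Nat.eq_zero_or_pos a.natDegree with h | h
        · exact absurd (hunit a ha0 h) ha
        · exact h
      have hbdeg : 0 < b.natDegree := by
        rcases Nat.eq_zero_or_pos b.natDegree with h | h
        · exact absurd (hunit b hb0 h) hb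
        · exact h
      have hsum : a.natDegree + b.natDegree = p.natDegree := by
        rw [hab, Polynomial.natDegree_mul ha0 hb0]
      set W := LinearMap.ker (Polynomial.aeval f a) with hW_def
      have hWinv : ∀ v ∈ W, τ v ∈ W := by
        intro v hv
        rw [hW_def, LinearMap.mem_ker] at hv ⊢
        have : (Polynomial.aeval f a) (f v) = f ((Polynomial.aeval f a) v) := by
          rw [← Module.End.mul_apply, ← hcomm, Module.End.mul_apply]
        show (Polynomial.aeval f a) (f v) = 0
        rw [this, hv, map_zero]
      rcases hirr W hWinv with hbot | htop
      · -- W = ⊥ : but range of aeval f b lands in W and aeval f b ≠ 0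
        have hbne : Polynomial.aeval f b ≠ 0 := by
          intro h
          have hdvd : p ∣ b := minpoly.dvd F f h
          have := Polynomial.natDegree_le_of_dvd hdvd hb0
          omega
        obtain ⟨v, hv⟩ : ∃ v, (Polynomial.aeval f b) v ≠ 0 := by
          by_contra h
          push_neg at h
          exact hbne (LinearMap.ext fun v => h v)
        have hmem : (Polynomial.aeval f b) v ∈ W := by
          rw [hW_def, LinearMap.mem_ker, ← Module.End.mul_apply, ← map_mul, ← hab,
            hpaeval]
          rfl
        rw [hbot, Submodule.mem_bot] at hmem
        exact hv hmem
      · -- W = ⊤ : aeval f a = 0, degree contradiction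
        have : Polynomial.aeval f a = 0 := by
          apply LinearMap.ext
          intro v
          have : v ∈ W := htop ▸ Submodule.mem_top
          rw [hW_def, LinearMap.mem_ker] at this
          simpa using this
        have hdvd : p ∣ a := minpoly.dvd F f this
        have := Polynomial.natDegree_le_of_dvd hdvd ha0
        omega
  haveI := Fact.mk hpirr
  set E := AdjoinRoot p with hE_def
  set α : E := AdjoinRoot.root p with hα_def
  haveI : Module.Finite F E := Module.Finite.of_basis (AdjoinRoot.powerBasis hp0).basis
  haveI : Finite E := Module.finite_of_finite F
  letI : Fintype E := Fintype.ofFinite E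
  have hEd : Module.finrank F E = p.natDegree := by
    rw [(AdjoinRoot.powerBasis hp0).finrank]
    rfl
  -- the algebra map to End V
  have hker : ∀ a : F[X], a ∈ Ideal.span ({p} : Set F[X]) → Polynomial.aeval f a = 0 := by
    intro a ha
    rcases Ideal.mem_span_singleton.mp ha with ⟨y, rfl⟩
    rw [map_mul, hpaeval, zero_mul]
  set Φ₀ : E →+* Module.End F V :=
    Ideal.Quotient.lift (Ideal.span ({p} : Set F[X])) (Polynomial.aeval f).toRingHom hker
      with hΦ₀_def
  have hΦ₀mk : ∀ g : F[X], Φ₀ (AdjoinRoot.mk p g) = Polynomial.aeval f g := fun g =>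
    Ideal.Quotient.lift_mk _ _ _
  set Φ : E →ₐ[F] Module.End F V :=
    { toRingHom := Φ₀,
      commutes' := fun c => by
        have h1 : (algebraMap F E) c = AdjoinRoot.mk p (Polynomial.C c) := rfl
        show Φ₀ (algebraMap F E c) = algebraMap F (Module.End F V) c
        rw [h1, hΦ₀mk, Polynomial.aeval_C] } with hΦ_def
  have hΦroot : Φ α = f := by
    have h1 : α = AdjoinRoot.mk p Polynomial.X := rfl
    show Φ₀ α = f
    rw [h1, hΦ₀mk, Polynomial.aeval_X]
  haveI : Nontrivial (Module.End F V) := by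
    obtain ⟨v0, hv0⟩ := exists_ne (0 : V)
    exact ⟨1, 0, fun h => hv0 (by simpa using LinearMap.ext_iff.mp h v0)⟩
  have hΦinj : Function.Injective Φ := Φ₀.injective
  -- α ≠ 0
  have hf0 : f ≠ 0 := by
    obtain ⟨v0, hv0⟩ := exists_ne (0 : V)
    intro h
    apply hv0
    have : f v0 = 0 := by rw [h]; rfl
    rw [hf_def] at this
    exact (LinearEquiv.map_eq_zero_iff τ).mp this
  have hα0 : α ≠ 0 := by
    intro h
    apply hf0
    rw [← hΦroot, h, map_zero]
  -- the adjoint relation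
  set g : Module.End F V := τ.symm.toLinearMap with hg_def
  have hadj : ∀ v w : V, B (f v) w = B v (g w) := by
    intro v w
    calc B (f v) w = B (τ v) (τ (τ.symm w)) := by rw [τ.apply_symm_apply]; rfl
    _ = B v (τ.symm w) := hiso v (τ.symm w)
  have hadj_pow : ∀ (i : ℕ) (v w : V), B ((f ^ i) v) w = B v ((g ^ i) w) := by
    intro i
    induction i with
    | zero => intro v w; rfl
    | succ i ih =>
      intro v w
      rw [pow_succ, pow_succ']
      rw [Module.End.mul_apply, Module.End.mul_apply]
      rw [ih (f v) w, hadj v ((g ^ i) w)]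
  -- adjoint relation for polynomials
  have hpoly : ∀ (r : F[X]) (v w : V),
      B ((Polynomial.aeval f r) v) w = B v ((Polynomial.aeval g r) w) := by
    intro r
    induction r using Polynomial.induction_on' with
    | add a b ha hb =>
      intro v w
      simp only [map_add, LinearMap.add_apply, ha v w, hb v w]
    | monomial i c =>
      intro v w
      simp only [Polynomial.aeval_monomial, Module.End.mul_apply,
        Module.algebraMap_end_apply, map_smul, LinearMap.smul_apply]
      rw [hadj_pow i v w]
  have hBflip : B.flip.Nondegenerate := hB.flip
  have hg_eval : Polynomial.aeval g p = 0 := by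
    apply LinearMap.ext
    intro w
    rw [LinearMap.zero_apply]
    apply hBflip.1 ((Polynomial.aeval g p) w)
    intro v
    rw [LinearMap.BilinForm.flip_apply, ← hpoly p v w, hpaeval, LinearMap.zero_apply, map_zero,
      LinearMap.zero_apply]
  have hfg : f * g = 1 := by
    apply LinearMap.ext; intro v
    show τ (τ.symm v) = v
    exact τ.apply_symm_apply v
  have hΦinv : Φ α⁻¹ = g := by
    have h1 : Φ α⁻¹ * f = 1 := by
      rw [← hΦroot, ← map_mul, inv_mul_cancel₀ hα0, map_one]
    calc Φ α⁻¹ = Φ α⁻¹ * (f * g) := by rw [hfg, mul_one]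
    _ = (Φ α⁻¹ * f) * g := by rw [mul_assoc]
    _ = g := by rw [h1, one_mul]
  have hinvroot : Polynomial.aeval α⁻¹ p = 0 := by
    apply hΦinj
    rw [map_zero, ← Polynomial.aeval_algHom_apply, hΦinv, hg_eval]
  have hminα : minpoly F α = p := by
    have hroot : Polynomial.aeval α p = 0 := by
      rw [hα_def, AdjoinRoot.aeval_eq, AdjoinRoot.mk_self]
    exact (minpoly.eq_of_irreducible_of_monic hpirr hroot hpmonic).symm
  -- V as E-vector space
  letI instEV : Module E V := Module.compHom V Φ.toRingHom
  haveI : IsScalarTower F E V := ⟨fun c e v => by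
    show (Φ (c • e)) v = c • (Φ e) v
    rw [map_smul, LinearMap.smul_apply]⟩
  obtain ⟨v0, hv0⟩ := exists_ne (0 : V)
  have hsmul : ∀ (x : E) (v : V), x • v = (Φ x) v := fun _ _ => rfl
  set W := Submodule.span E {v0} with hW_def
  have hWinv : ∀ v ∈ W.restrictScalars F, τ v ∈ W.restrictScalars F := by
    intro v hv
    have h1 : τ v = α • v := by rw [hsmul, hΦroot]; rfl
    rw [Submodule.restrictScalars_mem] at hv ⊢
    rw [h1]
    exact Submodule.smul_mem W α hv
  have hEV1 : Module.finrank E V = 1 := by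
    rcases hirr _ hWinv with hbot | htop
    · exfalso
      have hmem : v0 ∈ W := Submodule.mem_span_singleton_self v0
      rw [← Submodule.restrictScalars_mem F, hbot, Submodule.mem_bot] at hmem
      exact hv0 hmem
    · rw [Submodule.restrictScalars_eq_top_iff] at htop
      have hWtop : W = ⊤ := htop
      rw [← finrank_top E V, ← hWtop, hW_def]
      exact finrank_span_singleton hv0
  have hnd : n = p.natDegree := by
    have h1 : Module.finrank F E * Module.finrank E V = Module.finrank F V :=
      Module.finrank_mul_finrank F E V
    rw [hEV1, mul_one, hEd, hdim] at h1
    omega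
  -- order of τ equals order of α
  have horder : orderOf τ = orderOf α := by
    let j1 : (V ≃ₗ[F] V) →* Module.End F V :=
      { toFun := fun e => e.toLinearMap,
        map_one' := rfl,
        map_mul' := fun a b => rfl }
    have hj1inj : Function.Injective j1 := fun a b h => LinearEquiv.toLinearMap_injective h
    have h1 : orderOf (j1 τ) = orderOf τ := orderOf_injective j1 hj1inj τ
    have h2 : orderOf (Φ₀ α) = orderOf α := orderOf_injective Φ₀.toMonoidHom Φ₀.injective α
    have h3 : j1 τ = f := rfl
    have h4 : Φ₀ α = f := hΦroot
    rw [← h1, h3, ← h4, h2]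
  have hgen : Algebra.adjoin F ({α} : Set E) = ⊤ := by
    rw [hα_def]
    exact AdjoinRoot.adjoinRoot_eq_top
  have hinv' : Polynomial.aeval α⁻¹ (minpoly F α) = 0 := by rw [hminα]; exact hinvroot
  obtain ⟨heven, hdvd⟩ := aux_field p.natDegree (by omega) hEd α hgen hinv'
  refine ⟨hnd ▸ heven, ?_⟩
  rw [horder, hnd]
  exact hdvd
end

section
/- Let q be a power of a prime p and let σ ∈ GL_n(q) act indecomposably on V = F_q^n (i.e., V is not a direct sum of two nonzero σ-invariant subspaces). Then the order of σ divides p^b(q^u − 1) for some divisor u of n and some b ≥ 0 with p^{b−1} ≤ n/u − 1 whenever b > 0; moreover ord(σ) ≤ q^n − 1. -/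
/-!
Splitting `V` along a coprime factorisation `χ = g h` of the characteristic polynomial gives
the invariant decomposition `V = ker g(σ) ⊕ ker h(σ)`, and a non-unit factor of `χ` has a
nonzero kernel (a root of it over an algebraic closure lies in the spectrum). Hence
indecomposability forces `χ = f ^ t` with `f` irreducible of degree `u` and `n = t u`.
Over `𝔽_q` we have `f ∣ X ^ q ^ u - X`, so for `t ≤ p ^ b` the Frobenius identity gives
`f ^ t ∣ (X ^ q ^ u - X) ^ p ^ b = X ^ p ^ b (X ^ (p ^ b (q ^ u - 1)) - 1)`, and Cayley–Hamilton
together with the invertibility of `σ` yields `σ ^ (p ^ b (q ^ u - 1)) = 1`. With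
`b = ⌈log_p t⌉ ≤ t - 1` this exponent is at most `q ^ (u (t - 1)) (q ^ u - 1) < q ^ n`.
-/

open Polynomial

section Indecomposable

variable {R M : Type*} [CommRing R] [AddCommGroup M] [Module R M]

theorem Polynomial.isCompl_ker_aeval_of_isCoprime (f : Module.End R M) {g h : R[X]}
    (hgh : IsCoprime g h) (hann : aeval f (g * h) = 0) :
    IsCompl (LinearMap.ker (aeval f g)) (LinearMap.ker (aeval f h)) :=
  ⟨disjoint_ker_aeval_of_isCoprime f hgh, codisjoint_iff.2 <| by
    rw [sup_ker_aeval_eq_ker_aeval_mul_of_coprime f hgh, hann, LinearMap.ker_zero]⟩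

namespace Module.End

def IsIndecomposable (f : Module.End R M) : Prop :=
  ∀ U W : Submodule R M, (∀ v ∈ U, f v ∈ U) → (∀ v ∈ W, f v ∈ W) → IsCompl U W →
    U = ⊥ ∨ W = ⊥

lemma apply_mem_ker_aeval (f : Module.End R M) (g : R[X]) {v : M}
    (hv : v ∈ LinearMap.ker (aeval f g)) : f v ∈ LinearMap.ker (aeval f g) := by
  have hcomm : aeval f g * f = f * aeval f g := by
    simpa only [aeval_X] using ((Commute.all g X).map (aeval f)).eq
  rw [LinearMap.mem_ker] at hv ⊢
  rw [← Module.End.mul_apply, hcomm, Module.End.mul_apply, hv, map_zero]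

lemma IsIndecomposable.ker_aeval_eq_bot_or_of_isCoprime {f : Module.End R M}
    (hf : f.IsIndecomposable) {g h : R[X]} (hgh : IsCoprime g h) (hann : aeval f (g * h) = 0) :
    LinearMap.ker (aeval f g) = ⊥ ∨ LinearMap.ker (aeval f h) = ⊥ :=
  hf _ _ (fun _ ↦ apply_mem_ker_aeval f g) (fun _ ↦ apply_mem_ker_aeval f h)
    (isCompl_ker_aeval_of_isCoprime f hgh hann)

end Module.End

end Indecomposable

namespace Matrix

variable {n : Type*} [Fintype n] [DecidableEq n]

lemma aeval_map_algebraMap_eq_map_aeval {R S : Type*} [CommRing R] [CommRing S] [Algebra R S]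
    (A : Matrix n n R) (g : R[X]) :
    aeval (A.map (algebraMap R S)) g = (aeval A g).map (algebraMap R S) := by
  have hcoe : ⇑(Algebra.ofId R S) = algebraMap R S := funext (Algebra.ofId_apply _)
  simpa [hcoe] using aeval_algHom_apply (Algebra.ofId R S).mapMatrix A g

variable {K : Type*} [Field K]

lemma not_isUnit_aeval_of_dvd_charpoly (A : Matrix n n K) {g : K[X]} (hg : g ∣ A.charpoly)
    (hu : ¬IsUnit g) : ¬IsUnit (aeval A g) := by
  intro hA
  set L := AlgebraicClosure K
  have hg0 : g ≠ 0 := ne_zero_of_dvd_ne_zero A.charpoly_monic.ne_zero hg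
  obtain ⟨α, hα⟩ := IsAlgClosed.exists_root (g.map (algebraMap K L))
    (by rw [degree_map]; exact (degree_pos_of_ne_zero_of_nonunit hg0 hu).ne')
  have hspec : α ∈ spectrum L (A.map (algebraMap K L)) := by
    rw [mem_spectrum_iff_isRoot_charpoly, charpoly_map]
    obtain ⟨c, hc⟩ := Polynomial.map_dvd (algebraMap K L) hg
    rw [IsRoot, hc, eval_mul, hα.eq_zero, zero_mul]
  have h0 : eval α (g.map (algebraMap K L)) ∈ _ :=
    spectrum.subset_polynomial_aeval (A.map (algebraMap K L)) _ ⟨α, hspec, rfl⟩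
  rw [hα.eq_zero, spectrum.zero_mem_iff, aeval_map_algebraMap,
    aeval_map_algebraMap_eq_map_aeval] at h0
  exact h0 (hA.map (algebraMap K L).mapMatrix)

lemma isUnit_of_dvd_charpoly_of_ker_eq_bot (A : Matrix n n K) {g : K[X]} (hg : g ∣ A.charpoly)
    (hker : LinearMap.ker (aeval (toLin' A) g) = ⊥) : IsUnit g := by
  by_contra hu
  refine not_isUnit_aeval_of_dvd_charpoly A hg hu ?_
  have h := (LinearMap.isUnit_iff_ker_eq_bot _).2 hker
  change IsUnit (aeval (toLinAlgEquiv' A) g) at h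
  rwa [aeval_algEquiv, AlgHom.comp_apply, AlgEquiv.coe_toAlgHom, isUnit_map_iff] at h

theorem exists_charpoly_eq_pow_of_isIndecomposable (A : Matrix n n K)
    (hA : Module.End.IsIndecomposable (toLin' A)) :
    ∃ f : K[X], Irreducible f ∧ ∃ t, A.charpoly = f ^ t := by
  by_cases hu : IsUnit A.charpoly
  · exact ⟨X, irreducible_X, 0, by rwa [pow_zero, ← A.charpoly_monic.isUnit_iff]⟩
  obtain ⟨f, hmonic, hirr, hf⟩ := exists_monic_irreducible_factor _ hu
  obtain ⟨t, h, hfh, hP⟩ := WfDvdMonoid.max_power_factor A.charpoly_monic.ne_zero hirr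
  have hann : aeval (toLin' A) (f ^ t * h) = 0 := by
    rw [← hP, ← charpoly_toLin']
    exact LinearMap.aeval_self_charpoly _
  refine ⟨f, hirr, t, ?_⟩
  rcases hA.ker_aeval_eq_bot_or_of_isCoprime
    (hirr.coprime_iff_not_dvd.2 hfh).pow_left hann with hker | hker
  · have hunit := isUnit_of_dvd_charpoly_of_ker_eq_bot A (Dvd.intro _ hP.symm) hker
    exact absurd ((hunit.dvd_mul_left).1 (hP ▸ hf)) hfh
  · have hh : h.Monic := (hmonic.pow t).of_mul_monic_left (hP ▸ A.charpoly_monic)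
    have hunit := isUnit_of_dvd_charpoly_of_ker_eq_bot A (Dvd.intro_left _ hP.symm) hker
    rw [hP, hh.isUnit_iff.1 hunit, mul_one]

end Matrix

theorem pow_eq_one_of_aeval_irreducible_pow_eq_zero {F A : Type*} [Field F] [Fintype F]
    (p : ℕ) [Fact p.Prime] [CharP F p] [Ring A] [Algebra F A] {a : A} (ha : IsUnit a)
    {f : F[X]} (hf : Irreducible f) {t b : ℕ} (htb : t ≤ p ^ b) (hfa : aeval a (f ^ t) = 0) :
    a ^ (p ^ b * (Fintype.card F ^ f.natDegree - 1)) = 1 := by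
  obtain ⟨Q, hQ⟩ : ∃ Q, Fintype.card F ^ f.natDegree = Q + 1 :=
    Nat.exists_eq_add_one.2 (pow_pos Fintype.card_pos _)
  have hfX : f ∣ X ^ (Q + 1) - X := by
    rw [← hQ, ← Nat.card_eq_fintype_card]
    exact hf.natDegree_dvd_iff_dvd_X_pow_card_pow_sub_X.1 dvd_rfl
  have hdvd : f ^ t ∣ X ^ p ^ b * (X ^ (p ^ b * Q) - 1) :=
    calc f ^ t ∣ f ^ p ^ b := pow_dvd_pow f htb
      _ ∣ (X ^ (Q + 1) - X) ^ p ^ b := pow_dvd_pow_of_dvd hfX _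
      _ = X ^ p ^ b * (X ^ (p ^ b * Q) - 1) := by
        rw [sub_pow_char_pow, mul_sub, mul_one, ← pow_mul, ← pow_add]; ring_nf
  have h0 := aeval_eq_zero_of_dvd_aeval_eq_zero hdvd hfa
  rw [map_mul, map_sub, map_pow, map_pow, map_one, aeval_X, (ha.pow _).mul_right_eq_zero,
    sub_eq_zero] at h0
  rwa [hQ, Nat.add_sub_cancel]

theorem Nat.pow_sub_one_clog_le_sub_one {p t : ℕ} (hp : 1 < p) (hb : 0 < Nat.clog p t) :
    p ^ (Nat.clog p t - 1) ≤ t - 1 := by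
  have := (Nat.lt_clog_iff_pow_lt hp).1 (Nat.sub_one_lt hb.ne')
  omega

theorem Nat.pow_clog_mul_sub_one_le {p Q t : ℕ} (hp : 1 < p) (hpQ : p ≤ Q) (ht : 0 < t) :
    p ^ Nat.clog p t * (Q - 1) ≤ Q ^ t - 1 := by
  have ht_le : t ≤ p ^ (t - 1) := by
    have := Nat.lt_pow_self hp (n := t - 1)
    omega
  have hpow : p ^ Nat.clog p t ≤ Q ^ (t - 1) :=
    (Nat.pow_le_pow_right (by omega) (Nat.clog_le_of_le_pow ht_le)).trans
      (Nat.pow_le_pow_left hpQ _)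
  calc p ^ Nat.clog p t * (Q - 1) ≤ Q ^ (t - 1) * (Q - 1) := Nat.mul_le_mul_right _ hpow
    _ = Q ^ t - Q ^ (t - 1) := by rw [Nat.mul_sub_one, pow_sub_one_mul ht.ne']
    _ ≤ Q ^ t - 1 := Nat.sub_le_sub_left (Nat.one_le_pow _ _ (by omega)) _

/-- If `σ ∈ GL_n(q)` acts indecomposably on `F_q^n`, then `ord(σ)` divides
`p^b (q^u − 1)` with `u ∣ n`, `p^{b-1} ≤ n/u − 1` if `b > 0`, and `ord(σ) ≤ q^n − 1`. -/
theorem stmt13 {F : Type*} [Field F] [Fintype F] (p : ℕ) [Fact p.Prime] [CharP F p]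
    (n : ℕ) (hn : 0 < n) (σ : GL (Fin n) F)
    (hind : ∀ U W : Submodule F (Fin n → F),
      (∀ v ∈ U, (σ : Matrix (Fin n) (Fin n) F).mulVec v ∈ U) →
      (∀ v ∈ W, (σ : Matrix (Fin n) (Fin n) F).mulVec v ∈ W) →
      IsCompl U W → U = ⊥ ∨ W = ⊥) :
    ∃ u b : ℕ, u ∣ n ∧ orderOf σ ∣ p ^ b * (Fintype.card F ^ u - 1) ∧
      (0 < b → p ^ (b - 1) ≤ n / u - 1) ∧ orderOf σ ≤ Fintype.card F ^ n - 1 := by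
  obtain ⟨f, hirr, t, hP⟩ :=
    Matrix.exists_charpoly_eq_pow_of_isIndecomposable (σ : Matrix (Fin n) (Fin n) F) hind
  set q := Fintype.card F
  set u := f.natDegree
  have hp : 1 < p := (Fact.out : p.Prime).one_lt
  have hu : 0 < u := hirr.natDegree_pos
  have hn_eq : n = t * u := by
    have := (σ : Matrix (Fin n) (Fin n) F).charpoly_natDegree_eq_dim
    simpa [hP, natDegree_pow] using this.symm
  have ht : 0 < t := Nat.pos_of_ne_zero (by rintro rfl; omega)
  have hpq : p ≤ q ^ u :=
    (Nat.le_of_dvd Fintype.card_pos ((CharP.cast_eq_zero_iff F p _).1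
      (FiniteField.cast_card_eq_zero F))).trans (Nat.le_self_pow hu.ne' _)
  have hσ : σ ^ (p ^ Nat.clog p t * (q ^ u - 1)) = 1 := Units.ext <| by
    rw [Units.val_pow_eq_pow_val, Units.val_one]
    exact pow_eq_one_of_aeval_irreducible_pow_eq_zero p σ.isUnit hirr (Nat.le_pow_clog hp t)
      (hP ▸ Matrix.aeval_self_charpoly _)
  have hord := orderOf_dvd_of_pow_eq_one hσ
  refine ⟨u, Nat.clog p t, Dvd.intro_left t hn_eq.symm, hord, fun hb ↦ ?_, ?_⟩
  · rw [hn_eq, Nat.mul_div_cancel _ hu]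
    exact Nat.pow_sub_one_clog_le_sub_one hp hb
  · calc orderOf σ ≤ p ^ Nat.clog p t * (q ^ u - 1) :=
          Nat.le_of_dvd (Nat.mul_pos (pow_pos (by omega) _) (by omega)) hord
      _ ≤ (q ^ u) ^ t - 1 := Nat.pow_clog_mul_sub_one_le hp hpq ht
      _ = q ^ n - 1 := by rw [← pow_mul, hn_eq, mul_comm]
end

section
/- Let S be a non-abelian finite simple group, n = μ(S) the smallest degree of a faithful transitive permutation representation of S, and A a group with S ≤ A ≤ Aut(S). If A has a faithful primitive permutation action on a finite set Ω such that S acts transitively but imprimitively on Ω, then |Ω| ≥ 3n. -/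
/-!
Let `P` be the stabilizer in `S` of a point `x` and `B ∋ x` a nontrivial `S`-block with
stabilizer `H`, so that `|Ω| = |S : P| = |B| · |S : H|`. Since `S` is simple, every proper
subgroup of finite index is core-free and so has index at least `n`; this settles `|B| ≥ 3`.
If `|B| = 2`, primitivity of `A` gives `a ∈ A` with `a • B ≠ B` meeting `B`, and `a • B` is
again an `S`-block by normality. Hence `P` has index `2` in two distinct subgroups `H` and `K`,
so `P` is normal in `J = H ⊔ K` and `|J : P| ≥ 4`. If `J ≠ S` then `|Ω| ≥ 4n`; if `J = S` then
`P = 1`, and `|Ω| = |S| ≥ 3n` because the nonabelian group `S` has a cyclic subgroup of order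
at least `3`.
-/

open MulAction Subgroup
open scoped Pointwise

-- `n = μ(G)`: the least degree of a faithful transitive action is the least core-free index.
abbrev IsMinCoreFreeIndex (G : Type*) [Group G] (n : ℕ) : Prop :=
  IsLeast {m : ℕ | ∃ H : Subgroup G, H.normalCore = ⊥ ∧ H.index = m ∧ 0 < m} n

section SimpleGroup

variable {G : Type*} [Group G] {n : ℕ}

theorem exists_two_lt_orderOf [Finite G] (hG : ¬ ∀ a b : G, a * b = b * a) :
    ∃ x : G, 2 < orderOf x := by
  by_contra! h
  refine hG fun a b ↦ (Commute.of_orderOf_dvd_two (fun g ↦ ?_) a b).eq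
  obtain hg | hg : orderOf g = 1 ∨ orderOf g = 2 := by
    have := orderOf_pos g
    have := h g
    omega
  all_goals simp [hg]

theorem zpowers_ne_top_of_not_commutative (hG : ¬ ∀ a b : G, a * b = b * a) (x : G) :
    zpowers x ≠ ⊤ := by
  intro h
  refine hG fun a b ↦ ?_
  obtain ⟨i, rfl⟩ := mem_zpowers_iff.mp (h ▸ mem_top a)
  obtain ⟨j, rfl⟩ := mem_zpowers_iff.mp (h ▸ mem_top b)
  exact zpow_mul_comm x i j

variable [IsSimpleGroup G]

theorem IsMinCoreFreeIndex.le_index (hn : IsMinCoreFreeIndex G n) {H : Subgroup G}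
    (hH : H ≠ ⊤) (hH₀ : H.index ≠ 0) : n ≤ H.index := by
  refine hn.2 ⟨H, ?_, rfl, Nat.pos_of_ne_zero hH₀⟩
  refine H.normalCore_normal.eq_bot_or_eq_top.resolve_right fun h ↦ hH ?_
  exact top_le_iff.mp (h ▸ H.normalCore_le)

theorem IsMinCoreFreeIndex.three_mul_le_index (hn : IsMinCoreFreeIndex G n) {P J : Subgroup G}
    (hPJ : P ≤ J) (hJ : J ≠ ⊤) (h3 : 3 ≤ P.relIndex J) (hP : P.index ≠ 0) :
    3 * n ≤ P.index := by
  have hmul := relIndex_mul_index hPJ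
  have hJ₀ : J.index ≠ 0 := right_ne_zero_of_mul (hmul ▸ hP)
  rw [← hmul]
  exact Nat.mul_le_mul h3 (hn.le_index hJ hJ₀)

theorem IsMinCoreFreeIndex.three_mul_le_card [Finite G] (hn : IsMinCoreFreeIndex G n)
    (hG : ¬ ∀ a b : G, a * b = b * a) : 3 * n ≤ Nat.card G := by
  obtain ⟨x, hx⟩ := exists_two_lt_orderOf hG
  rw [← index_bot]
  refine hn.three_mul_le_index bot_le (zpowers_ne_top_of_not_commutative hG x) ?_
    index_ne_zero_of_finite
  rwa [relIndex_bot_left, Nat.card_zpowers]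

end SimpleGroup

namespace Subgroup

variable {G : Type*} [Group G]

theorem le_normalizer_of_relIndex_eq_two {P H : Subgroup G} (hPH : P ≤ H)
    (h2 : P.relIndex H = 2) : H ≤ normalizer (P : Set G) :=
  have := normal_of_index_eq_two h2
  le_normalizer_of_normal_subgroupOf hPH

theorem three_le_relIndex_sup {P H K : Subgroup G} (hPH : P ≤ H) (hPK : P ≤ K)
    (hH : P.relIndex H = 2) (hK : P.relIndex K = 2) (hHK : H ≠ K)
    (h₀ : P.relIndex (H ⊔ K) ≠ 0) : 3 ≤ P.relIndex (H ⊔ K) := by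
  have hmul := relIndex_mul_relIndex P H (H ⊔ K) hPH le_sup_left
  have hne : H.relIndex (H ⊔ K) ≠ 1 := by
    intro h1
    have hKH : K ≤ H := le_sup_right.trans (relIndex_eq_one.mp h1)
    have := relIndex_mul_relIndex P K H hPK hKH
    rw [hH, hK] at this
    exact hHK (le_antisymm (relIndex_eq_one.mp (by omega)) hKH)
  rw [← hmul, hH] at h₀ ⊢
  omega

end Subgroup

theorem IsMinCoreFreeIndex.three_mul_le_index_of_relIndex_eq_two {G : Type*} [Group G]
    [IsSimpleGroup G] {n : ℕ} (hn : IsMinCoreFreeIndex G n) (hG : ¬ ∀ a b : G, a * b = b * a)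
    {P H K : Subgroup G} (hPH : P ≤ H) (hPK : P ≤ K) (hH : P.relIndex H = 2)
    (hK : P.relIndex K = 2) (hHK : H ≠ K) (hP : P.index ≠ 0) : 3 * n ≤ P.index := by
  by_cases hJ : H ⊔ K = ⊤
  · have hnorm : P.Normal := normalizer_eq_top_iff.mp <| top_le_iff.mp <| hJ ▸
      sup_le (le_normalizer_of_relIndex_eq_two hPH hH) (le_normalizer_of_relIndex_eq_two hPK hK)
    obtain rfl : P = ⊥ := hnorm.eq_bot_or_eq_top.resolve_right fun h ↦ by
      simp [h] at hH
    have : Finite G := Nat.finite_of_card_ne_zero (index_bot (G := G) ▸ hP)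
    rw [index_bot]
    exact hn.three_mul_le_card hG
  · have h₀ : P.relIndex (H ⊔ K) ≠ 0 :=
      left_ne_zero_of_mul (relIndex_mul_index (hPH.trans le_sup_left) ▸ hP)
    exact hn.three_mul_le_index (hPH.trans le_sup_left) hJ
      (three_le_relIndex_sup hPH hPK hH hK hHK h₀) hP

namespace MulAction

variable {G X : Type*} [Group G] [MulAction G X]

theorem IsBlock.smul_of_normal {S : Subgroup G} [S.Normal] {B : Set X} (hB : IsBlock S B)
    (g : G) : IsBlock S (g • B) := by
  have hS : S.map (MulAut.conj g).toMonoidHom = S := Normal.map_conj_eq S g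
  exact hS ▸ hB.of_subgroup_of_conjugate g

theorem IsBlock.stabilizer_ne [IsPretransitive G X] {B C : Set X} (hB : IsBlock G B)
    (hC : IsBlock G C) {x : X} (hxB : x ∈ B) (hxC : x ∈ C) (hBC : B ≠ C) :
    stabilizer G B ≠ stabilizer G C := fun h ↦
  hBC (by rw [← hB.orbit_stabilizer_eq hxB, h, hC.orbit_stabilizer_eq hxC])

end MulAction

section TransitiveAction

variable {G X : Type*} [Group G] [IsSimpleGroup G] [MulAction G X] [IsPretransitive G X]
  {n : ℕ}

theorem IsMinCoreFreeIndex.three_mul_le_card_of_three_le_ncard (hn : IsMinCoreFreeIndex G n)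
    {B : Set X} (hB : IsBlock G B) (h3 : 3 ≤ B.ncard) (hBX : B.ncard < Nat.card X) :
    3 * n ≤ Nat.card X := by
  obtain ⟨x, hx⟩ := Set.nonempty_of_ncard_ne_zero (by omega : B.ncard ≠ 0)
  have hP := index_stabilizer_of_transitive G x
  have hB' := hB.ncard_block_eq_relIndex hx
  refine hP ▸ hn.three_mul_le_index (hB.stabilizer_le hx) (fun htop ↦ ?_) (hB' ▸ h3) (by omega)
  rw [htop, relIndex_top_right, hP] at hB'
  omega

theorem IsMinCoreFreeIndex.three_mul_le_card_of_ncard_eq_two (hn : IsMinCoreFreeIndex G n)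
    (hG : ¬ ∀ a b : G, a * b = b * a) {B C : Set X} (hB : IsBlock G B) (hC : IsBlock G C)
    (hB2 : B.ncard = 2) (hC2 : C.ncard = 2) (hBC : B ≠ C) {x : X} (hxB : x ∈ B) (hxC : x ∈ C)
    (hX : Nat.card X ≠ 0) : 3 * n ≤ Nat.card X := by
  rw [← index_stabilizer_of_transitive G x] at hX ⊢
  exact hn.three_mul_le_index_of_relIndex_eq_two hG
    (hB.stabilizer_le hxB) (hC.stabilizer_le hxC)
    (hB.ncard_block_eq_relIndex hxB ▸ hB2) (hC.ncard_block_eq_relIndex hxC ▸ hC2)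
    (hB.stabilizer_ne hC hxB hxC hBC) hX

end TransitiveAction

theorem stmt19_general {A : Type*} [Group A] (S : Subgroup A) [S.Normal]
    (hsimple : IsSimpleGroup S) (hnonab : ¬ ∀ a b : S, a * b = b * a)
    (n : ℕ)
    (hn : IsLeast {m : ℕ | ∃ H : Subgroup S, H.normalCore = ⊥ ∧ H.index = m ∧ 0 < m} n)
    (Ω : Type*) [MulAction A Ω]
    (hAprim : ∀ B : Set Ω, MulAction.IsBlock A B → B.Subsingleton ∨ B = Set.univ)
    (hStrans : MulAction.IsPretransitive S Ω)
    (hSimpr : ∃ B : Set Ω, MulAction.IsBlock S B ∧ 1 < B.ncard ∧ B.ncard < Nat.card Ω) :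
    3 * n ≤ Nat.card Ω := by
  have hn : IsMinCoreFreeIndex S n := hn
  obtain ⟨B, hB, hB1, hBΩ⟩ := hSimpr
  obtain h3 | hB2 : 3 ≤ B.ncard ∨ B.ncard = 2 := by omega
  · exact hn.three_mul_le_card_of_three_le_ncard hB h3 hBΩ
  have hBA : ¬ IsBlock A B := fun hBA ↦ (hAprim B hBA).elim
    (Set.one_lt_ncard_iff_nontrivial_and_finite.mp hB1).1.not_subsingleton
    (fun h ↦ by simp [h] at hBΩ)
  obtain ⟨a, ⟨x, hxa, hx⟩, haB⟩ : ∃ a : A, (a • B ∩ B).Nonempty ∧ a • B ≠ B := by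
    simpa [isBlock_iff_smul_eq_of_nonempty] using hBA
  exact hn.three_mul_le_card_of_ncard_eq_two hnonab (hB.smul_of_normal a) hB
    (by rwa [Set.ncard_smul_set]) hB2 haB hxa hx (by omega)

/-- Let `S` be a non-abelian simple group, `n = μ(S)` the smallest degree of a faithful
transitive permutation representation of `S` (equivalently, the least index of a
subgroup of `S` with trivial normal core), and `A` a group with `S ≤ A ≤ Aut(S)`
(encoded: `S` is a normal subgroup of `A` with trivial centralizer in `A`).  If `A`
acts faithfully and primitively on a finite set `Ω`, and `S` acts transitively but
imprimitively on `Ω`, then `|Ω| ≥ 3n`. -/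
theorem stmt19 {A : Type*} [Group A] (S : Subgroup A) [S.Normal]
    (hsimple : IsSimpleGroup S) (hnonab : ¬ ∀ a b : S, a * b = b * a)
    (hcent : Subgroup.centralizer (S : Set A) = ⊥)
    (n : ℕ)
    (hn : IsLeast {m : ℕ | ∃ H : Subgroup S, H.normalCore = ⊥ ∧ H.index = m ∧ 0 < m} n)
    (Ω : Type*) [Finite Ω] [MulAction A Ω] [FaithfulSMul A Ω]
    (hAtrans : MulAction.IsPretransitive A Ω)
    (hAprim : ∀ B : Set Ω, MulAction.IsBlock A B → B.Subsingleton ∨ B = Set.univ)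
    (hStrans : MulAction.IsPretransitive S Ω)
    (hSimpr : ∃ B : Set Ω, MulAction.IsBlock S B ∧ 1 < B.ncard ∧ B.ncard < Nat.card Ω) :
    3 * n ≤ Nat.card Ω :=
  stmt19_general S hsimple hnonab n hn Ω hAprim hStrans hSimpr
end
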